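/- arXiv:2206.06536 — 2 statements merged into one kernel-verified Lean document; each statement's English description precedes it below -/
import Mathlib

section
/- Let f : ℝ^d × ℝ → ℝ^d satisfy ‖f(x₁,u) − f(x₂,u)‖ ≤ C₁‖x₁ − x₂‖ and ‖f(x,u₁) − f(x,u₂)‖ ≤ C₁|u₁ − u₂| for a constant C₁ > 0. Let a = t₀ < t₁ < ⋯ < t_M = b be a partition with step sizes h_n = t_{n+1} − t_n and h = max_n h_n. Let x, x̃ : [a,b] → ℝ^d be differentiable with x'(t) = f(x(t), u(t)), x̃'(t) = f(x̃(t), u_m(t)), and x(a) = x̃(a), where the continuous inputs satisfy sup_{s ∈ [t_n, t_{n+1}]} |u(s) − u_m(s)| ≤ κ_n for each n. Define ē = max_n C₁ h_n κ_n e^{C₁ h_n} and C̄ = e^{C₁ h}. Then for every n ≤ M: ‖x(t_n) − x̃(t_n)‖ ≤ ((1 − C̄^n)/(1 − C̄)) ē, i.e., ‖x(t_n) − x̃(t_n)‖ ≤ ((C̄^n − 1)/(C̄ − 1)) ē. -/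
/-!
On each step `[tₙ, tₙ₊₁]` the error `e = x - x̃` satisfies `‖e'‖ ≤ C₁‖e‖ + C₁κₙ`, so Grönwall's
inequality gives `‖e(tₙ₊₁)‖ ≤ e^{C₁hₙ}‖e(tₙ)‖ + κₙ(e^{C₁hₙ} - 1) ≤ C̄‖e(tₙ)‖ + ē`, using
`e^z - 1 ≤ z e^z`. Unrolling this linear recursion from `e(t₀) = 0` yields the geometric sum
`(1 + C̄ + ⋯ + C̄ⁿ⁻¹) ē`.
-/

open Real Set Finset

theorem Real.exp_sub_one_le_mul_exp (z : ℝ) : exp z - 1 ≤ z * exp z := by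
  have h := mul_le_mul_of_nonneg_right (one_sub_le_exp_neg z) (exp_pos z).le
  rw [← exp_add, neg_add_cancel, exp_zero] at h
  linarith

theorem gronwallBound_mul_le (δ K x : ℝ) {κ : ℝ} (hκ : 0 ≤ κ) :
    gronwallBound δ K (K * κ) x ≤ exp (K * x) * δ + K * x * κ * exp (K * x) := by
  rcases eq_or_ne K 0 with rfl | hK
  · simp [gronwallBound_K0]
  · rw [gronwallBound_of_K_ne_0 hK, mul_div_cancel_left₀ κ hK]
    nlinarith [mul_le_mul_of_nonneg_left (exp_sub_one_le_mul_exp (K * x)) hκ]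

theorem le_pow_mul_add_geom_sum_mul {e : ℕ → ℝ} {c E : ℝ} {N : ℕ} (hc : 0 ≤ c)
    (he : ∀ n < N, e (n + 1) ≤ c * e n + E) :
    ∀ n ≤ N, e n ≤ c ^ n * e 0 + (∑ i ∈ range n, c ^ i) * E := by
  intro n hn
  induction n with
  | zero => simp
  | succ n ih =>
    calc e (n + 1) ≤ c * e n + E := he n hn
      _ ≤ c * (c ^ n * e 0 + (∑ i ∈ range n, c ^ i) * E) + E := by
        gcongr; exact ih (by omega)
      _ = c ^ (n + 1) * e 0 + (∑ i ∈ range (n + 1), c ^ i) * E := by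
        rw [geom_sum_succ]; ring

theorem Icc_subset_Icc_zero_of_le_succ {t : ℕ → ℝ} {M : ℕ} (ht : ∀ n < M, t n ≤ t (n + 1))
    {n : ℕ} (hn : n < M) : Icc (t n) (t (n + 1)) ⊆ Icc (t 0) (t M) := by
  have hmono : Monotone fun k ↦ t (min k M) := monotone_nat_of_le_succ fun k ↦ by
    rcases lt_or_ge k M with hk | hk
    · simpa [min_eq_left hk.le, min_eq_left (Nat.succ_le_of_lt hk)] using ht k hk
    · simp [min_eq_right hk, min_eq_right (hk.trans k.le_succ)]
  apply Set.Icc_subset_Icc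
  · simpa [min_eq_left hn.le] using hmono (Nat.zero_le n)
  · simpa [min_eq_left (Nat.succ_le_of_lt hn)] using hmono (Nat.succ_le_of_lt hn)

section InputPerturbation

variable {E U : Type*} [NormedAddCommGroup E] [SeminormedAddCommGroup U]
  {f : E → U → E} {C : ℝ}

theorem norm_sub_le_of_lipschitz_state_input
    (hstate : ∀ x₁ x₂ u, ‖f x₁ u - f x₂ u‖ ≤ C * ‖x₁ - x₂‖)
    (hinput : ∀ x u₁ u₂, ‖f x u₁ - f x u₂‖ ≤ C * ‖u₁ - u₂‖) (x y : E) (u v : U) :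
    ‖f x u - f y v‖ ≤ C * ‖x - y‖ + C * ‖u - v‖ :=
  calc ‖f x u - f y v‖ = ‖(f x u - f y u) + (f y u - f y v)‖ := by rw [sub_add_sub_cancel]
    _ ≤ ‖f x u - f y u‖ + ‖f y u - f y v‖ := norm_add_le _ _
    _ ≤ C * ‖x - y‖ + C * ‖u - v‖ := add_le_add (hstate _ _ _) (hinput _ _ _)

theorem norm_sub_le_of_hasDerivAt_of_input_le [NormedSpace ℝ E] (hC : 0 ≤ C)
    (hstate : ∀ x₁ x₂ u, ‖f x₁ u - f x₂ u‖ ≤ C * ‖x₁ - x₂‖)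
    (hinput : ∀ x u₁ u₂, ‖f x u₁ - f x u₂‖ ≤ C * ‖u₁ - u₂‖)
    {x y : ℝ → E} {u v : ℝ → U} {a b κ : ℝ} (hab : a ≤ b)
    (hx : ∀ s ∈ Icc a b, HasDerivAt x (f (x s) (u s)) s)
    (hy : ∀ s ∈ Icc a b, HasDerivAt y (f (y s) (v s)) s)
    (huv : ∀ s ∈ Icc a b, ‖u s - v s‖ ≤ κ) :
    ‖x b - y b‖ ≤ exp (C * (b - a)) * ‖x a - y a‖ + C * (b - a) * κ * exp (C * (b - a)) := by
  have hderiv : ∀ s ∈ Icc a b, HasDerivAt (x - y) (f (x s) (u s) - f (y s) (v s)) s :=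
    fun s hs ↦ (hx s hs).sub (hy s hs)
  have hbound : ∀ s ∈ Ico a b, ‖f (x s) (u s) - f (y s) (v s)‖ ≤ C * ‖(x - y) s‖ + C * κ :=
    fun s hs ↦ (norm_sub_le_of_lipschitz_state_input hstate hinput _ _ _ _).trans <|
      add_le_add_right (mul_le_mul_of_nonneg_left (huv s (Ico_subset_Icc_self hs)) hC) _
  have hgronwall := norm_le_gronwallBound_of_norm_deriv_right_le
    (fun s hs ↦ (hderiv s hs).continuousAt.continuousWithinAt)
    (fun s hs ↦ (hderiv s (Ico_subset_Icc_self hs)).hasDerivWithinAt) le_rfl hbound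
    b ⟨hab, le_rfl⟩
  exact hgronwall.trans <| gronwallBound_mul_le _ _ _ <|
    (norm_nonneg _).trans (huv a ⟨le_rfl, hab⟩)

end InputPerturbation

theorem cumulative_input_discretization_error_general
    {d : ℕ}
    (f : EuclideanSpace ℝ (Fin d) → ℝ → EuclideanSpace ℝ (Fin d))
    (C₁ : ℝ) (hC₁ : 0 < C₁)
    (hf_lip_state : ∀ (x₁ x₂ : EuclideanSpace ℝ (Fin d)) (u : ℝ),
      ‖f x₁ u - f x₂ u‖ ≤ C₁ * ‖x₁ - x₂‖)
    (hf_lip_input : ∀ (x : EuclideanSpace ℝ (Fin d)) (u₁ u₂ : ℝ),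
      ‖f x u₁ - f x u₂‖ ≤ C₁ * |u₁ - u₂|)
    (M : ℕ)
    (t : ℕ → ℝ) (ht : ∀ n < M, t n < t (n + 1))
    (h : ℝ)
    (hmax : IsGreatest {s : ℝ | ∃ n < M, s = t (n + 1) - t n} h)
    (x xt : ℝ → EuclideanSpace ℝ (Fin d))
    (u um : ℝ → ℝ)
    (hx : ∀ s ∈ Set.Icc (t 0) (t M), HasDerivAt x (f (x s) (u s)) s)
    (hxt : ∀ s ∈ Set.Icc (t 0) (t M), HasDerivAt xt (f (xt s) (um s)) s)
    (hinit : x (t 0) = xt (t 0))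
    (κ : ℕ → ℝ)
    (hκ : ∀ n < M, ∀ s ∈ Set.Icc (t n) (t (n + 1)), |u s - um s| ≤ κ n)
    (ebar : ℝ)
    (hebar : IsGreatest
      {e : ℝ | ∃ n < M,
        e = C₁ * (t (n + 1) - t n) * κ n * Real.exp (C₁ * (t (n + 1) - t n))} ebar) :
    ∀ n ≤ M,
      ‖x (t n) - xt (t n)‖ ≤
        ((1 - Real.exp (C₁ * h) ^ n) / (1 - Real.exp (C₁ * h))) * ebar := by
  set c := exp (C₁ * h)
  have hc : 1 < c := by
    obtain ⟨k, hk, rfl⟩ := hmax.1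
    exact one_lt_exp_iff.2 (mul_pos hC₁ (sub_pos.2 (ht k hk)))
  have hstep : ∀ n < M, ‖x (t (n + 1)) - xt (t (n + 1))‖ ≤ c * ‖x (t n) - xt (t n)‖ + ebar := by
    intro n hn
    have hsub := Icc_subset_Icc_zero_of_le_succ (fun k hk ↦ (ht k hk).le) hn
    calc ‖x (t (n + 1)) - xt (t (n + 1))‖
        ≤ exp (C₁ * (t (n + 1) - t n)) * ‖x (t n) - xt (t n)‖
          + C₁ * (t (n + 1) - t n) * κ n * exp (C₁ * (t (n + 1) - t n)) :=
        norm_sub_le_of_hasDerivAt_of_input_le hC₁.le hf_lip_state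
          (by simpa only [Real.norm_eq_abs] using hf_lip_input) (ht n hn).le
          (fun s hs ↦ hx s (hsub hs)) (fun s hs ↦ hxt s (hsub hs))
          (by simpa only [Real.norm_eq_abs] using hκ n hn)
      _ ≤ c * ‖x (t n) - xt (t n)‖ + ebar := by
        gcongr ?_ * _ + ?_
        · exact exp_le_exp.2 (mul_le_mul_of_nonneg_left (hmax.2 ⟨n, hn, rfl⟩) hC₁.le)
        · exact hebar.2 ⟨n, hn, rfl⟩
  intro n hn
  simpa [hinit, geom_sum_eq hc.ne', ← neg_div_neg_eq (c ^ n - 1)] using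
    le_pow_mul_add_geom_sum_mul (e := fun n ↦ ‖x (t n) - xt (t n)‖) (zero_le_one.trans hc.le)
      hstep n hn

/-- Lemma 2 of the paper: cumulative error between the exact solution `x` of
`ẋ = f(x, u)` and the solution `x̃` of the approximate system `ẋ̃ = f(x̃, uₘ)`,
started from the same initial condition, over a partition `a = t₀ < ⋯ < t_M = b`:
`‖x(tₙ) − x̃(tₙ)‖ ≤ ((1 − C̄ⁿ)/(1 − C̄)) ē` with `C̄ = e^{C₁ h}`,
`ē = maxₙ C₁ hₙ κₙ e^{C₁ hₙ}`, `h = maxₙ hₙ`. -/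
theorem cumulative_input_discretization_error
    {d : ℕ}
    (f : EuclideanSpace ℝ (Fin d) → ℝ → EuclideanSpace ℝ (Fin d))
    (C₁ : ℝ) (hC₁ : 0 < C₁)
    (hf_lip_state : ∀ (x₁ x₂ : EuclideanSpace ℝ (Fin d)) (u : ℝ),
      ‖f x₁ u - f x₂ u‖ ≤ C₁ * ‖x₁ - x₂‖)
    (hf_lip_input : ∀ (x : EuclideanSpace ℝ (Fin d)) (u₁ u₂ : ℝ),
      ‖f x u₁ - f x u₂‖ ≤ C₁ * |u₁ - u₂|)
    (M : ℕ) (hM : 0 < M)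
    (t : ℕ → ℝ) (ht : ∀ n < M, t n < t (n + 1))
    (h : ℝ)
    (hmax : IsGreatest {s : ℝ | ∃ n < M, s = t (n + 1) - t n} h)
    (x xt : ℝ → EuclideanSpace ℝ (Fin d))
    (u um : ℝ → ℝ)
    (hu_cont : ContinuousOn u (Set.Icc (t 0) (t M)))
    (hum_cont : ContinuousOn um (Set.Icc (t 0) (t M)))
    (hx : ∀ s ∈ Set.Icc (t 0) (t M), HasDerivAt x (f (x s) (u s)) s)
    (hxt : ∀ s ∈ Set.Icc (t 0) (t M), HasDerivAt xt (f (xt s) (um s)) s)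
    (hinit : x (t 0) = xt (t 0))
    (κ : ℕ → ℝ)
    (hκ : ∀ n < M, ∀ s ∈ Set.Icc (t n) (t (n + 1)), |u s - um s| ≤ κ n)
    (ebar : ℝ)
    (hebar : IsGreatest
      {e : ℝ | ∃ n < M,
        e = C₁ * (t (n + 1) - t n) * κ n * Real.exp (C₁ * (t (n + 1) - t n))} ebar) :
    ∀ n ≤ M,
      ‖x (t n) - xt (t n)‖ ≤
        ((1 - Real.exp (C₁ * h) ^ n) / (1 - Real.exp (C₁ * h))) * ebar :=
  cumulative_input_discretization_error_general f C₁ hC₁ hf_lip_state hf_lip_input M t ht h hmax x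
    xt u um hx hxt hinit κ hκ ebar hebar
end

section
/- Let f : ℝ^d × ℝ → ℝ^d satisfy ‖f(x₁,u) − f(x₂,u)‖ ≤ C₁‖x₁ − x₂‖ and ‖f(x,u₁) − f(x,u₂)‖ ≤ C₁|u₁ − u₂| for a constant C₁ > 0. Let a = t₀ < ⋯ < t_M = b be a partition with h_n = t_{n+1} − t_n, h = max_n h_n, and C̄ = e^{C₁ h}. Let x solve ẋ = f(x, u) and x̃ solve ẋ̃ = f(x̃, u_m) with x(a) = x̃(a), where sup_{[t_n,t_{n+1}]} |u − u_m| ≤ κ_n, and set ē = max_n C₁ h_n κ_n e^{C₁ h_n}; assume ē > 0. Let Φ : ℝ^d × ℝ^{n_s} × ℝ → ℝ^d be Lipschitz in its first argument with constant C₂ > 0, C₂ ≠ 1, such that x̃(t_{n+1}) = Φ(x̃(t_n), c_n, h_n) for sensor vectors c_n representing u_m on each step. Let F : ℝ^d × ℝ^{n_s} × ℝ → ℝ^d satisfy ‖F(y,c,h') − Φ(y,c,h')‖ ≤ ē for all y, c, h', and define x̌_{n+1} = F(x̌_n, c_n, h_n) with x̌₀ = x(a). Then for every n ≤ M: ‖x(t_n)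 − x̌_n‖ ≤ ((1 − C̄^n)/(1 − C̄)) ē + ((1 − C₂^n)/(1 − C₂)) ē. -/
/-- Recursive geometric-sum bound: if `e 0 ≤ 0` and `e (k+1) ≤ r * e k + b`
for all `k < n`, with `r ≥ 0`, then `e n ≤ (∑ i ∈ range n, r^i) * b`. -/
lemma deeponet_rec_bound {e : ℕ → ℝ} {r b : ℝ} (hr : 0 ≤ r) (h0 : e 0 ≤ 0) :
    ∀ n, (∀ k < n, e (k + 1) ≤ r * e k + b) →
      e n ≤ (∑ i ∈ Finset.range n, r ^ i) * b := by
  intro n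
  induction n with
  | zero => intro _; simpa using h0
  | succ m ih =>
    intro hrec
    have hm : e m ≤ (∑ i ∈ Finset.range m, r ^ i) * b :=
      ih fun k hk => hrec k (Nat.lt_succ_of_lt hk)
    have h1 : e (m + 1) ≤ r * e m + b := hrec m (Nat.lt_succ_self m)
    have : e (m + 1) ≤ r * ((∑ i ∈ Finset.range m, r ^ i) * b) + b := by
      nlinarith [mul_le_mul_of_nonneg_left hm hr]
    calc e (m + 1) ≤ r * ((∑ i ∈ Finset.range m, r ^ i) * b) + b := this
      _ = (∑ i ∈ Finset.range (m + 1), r ^ i) * b := by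
          rw [geom_sum_succ]; ring

/-- `(1 - r^n)/(1 - r)` equals the geometric sum when `r ≠ 1`. -/
lemma deeponet_geom_sum_eq {r : ℝ} (hr : r ≠ 1) (n : ℕ) :
    (1 - r ^ n) / (1 - r) = ∑ i ∈ Finset.range n, r ^ i := by
  rw [geom_sum_eq hr, div_eq_div_iff (sub_ne_zero.2 fun h => hr h.symm)
    (sub_ne_zero.2 hr)]
  ring

/-- `e^z - 1 ≤ z e^z` for `z ≥ 0`. -/
lemma deeponet_exp_ineq (z : ℝ) (hz : 0 ≤ z) : Real.exp z - 1 ≤ z * Real.exp z := by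
  have h1 : 1 - z ≤ Real.exp (-z) := by
    have := Real.add_one_le_exp (-z); linarith
  have h2 : Real.exp z * (1 - z) ≤ Real.exp z * Real.exp (-z) :=
    mul_le_mul_of_nonneg_left h1 (Real.exp_pos z).le
  rw [← Real.exp_add] at h2
  simp only [add_neg_cancel, Real.exp_zero] at h2
  nlinarith

/-- Theorem 1 of the paper: total error bound for the DeepONet-based numerical
scheme (Algorithm 1), combining the input-discretization error of Lemma 2 with the
network-approximation error of Lemma 3:
`‖x(tₙ) − x̌ₙ‖ ≤ ((1 − C̄ⁿ)/(1 − C̄)) ē + ((1 − C₂ⁿ)/(1 − C₂)) ē`, `C̄ = e^{C₁ h}`. -/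
theorem deeponet_scheme_total_error_bound
    {d ns : ℕ}
    (f : EuclideanSpace ℝ (Fin d) → ℝ → EuclideanSpace ℝ (Fin d))
    (C₁ : ℝ) (hC₁ : 0 < C₁)
    (hf_lip_state : ∀ (x₁ x₂ : EuclideanSpace ℝ (Fin d)) (u : ℝ),
      ‖f x₁ u - f x₂ u‖ ≤ C₁ * ‖x₁ - x₂‖)
    (hf_lip_input : ∀ (x : EuclideanSpace ℝ (Fin d)) (u₁ u₂ : ℝ),
      ‖f x u₁ - f x u₂‖ ≤ C₁ * |u₁ - u₂|)
    (M : ℕ) (hM : 0 < M)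
    (t : ℕ → ℝ) (ht : ∀ n < M, t n < t (n + 1))
    (h : ℝ)
    (hmax : IsGreatest {s : ℝ | ∃ n < M, s = t (n + 1) - t n} h)
    (x xt : ℝ → EuclideanSpace ℝ (Fin d))
    (u um : ℝ → ℝ)
    (hu_cont : ContinuousOn u (Set.Icc (t 0) (t M)))
    (hum_cont : ContinuousOn um (Set.Icc (t 0) (t M)))
    (hx : ∀ s ∈ Set.Icc (t 0) (t M), HasDerivAt x (f (x s) (u s)) s)
    (hxt : ∀ s ∈ Set.Icc (t 0) (t M), HasDerivAt xt (f (xt s) (um s)) s)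
    (hinit : x (t 0) = xt (t 0))
    (κ : ℕ → ℝ)
    (hκ : ∀ n < M, ∀ s ∈ Set.Icc (t n) (t (n + 1)), |u s - um s| ≤ κ n)
    (ebar : ℝ) (hebar_pos : 0 < ebar)
    (hebar : IsGreatest
      {e : ℝ | ∃ n < M,
        e = C₁ * (t (n + 1) - t n) * κ n * Real.exp (C₁ * (t (n + 1) - t n))} ebar)
    (Φ F : EuclideanSpace ℝ (Fin d) → (Fin ns → ℝ) → ℝ → EuclideanSpace ℝ (Fin d))
    (C₂ : ℝ) (hC₂ : 0 < C₂) (hC₂1 : C₂ ≠ 1)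
    (hΦ_lip : ∀ (y₁ y₂ : EuclideanSpace ℝ (Fin d)) (c : Fin ns → ℝ) (h' : ℝ),
      ‖Φ y₁ c h' - Φ y₂ c h'‖ ≤ C₂ * ‖y₁ - y₂‖)
    (c : ℕ → Fin ns → ℝ)
    (hΦ_flow : ∀ n < M, xt (t (n + 1)) = Φ (xt (t n)) (c n) (t (n + 1) - t n))
    (hF : ∀ (y : EuclideanSpace ℝ (Fin d)) (cv : Fin ns → ℝ) (h' : ℝ),
      ‖F y cv h' - Φ y cv h'‖ ≤ ebar)
    (xc : ℕ → EuclideanSpace ℝ (Fin d))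
    (hxc : ∀ n, xc (n + 1) = F (xc n) (c n) (t (n + 1) - t n))
    (hxc0 : xc 0 = x (t 0)) :
    ∀ n ≤ M,
      ‖x (t n) - xc n‖ ≤
        ((1 - Real.exp (C₁ * h) ^ n) / (1 - Real.exp (C₁ * h))) * ebar
          + ((1 - C₂ ^ n) / (1 - C₂)) * ebar := by
  intro n hn
  -- Basic facts about the partition
  have hmono : ∀ i j, i ≤ j → j ≤ M → t i ≤ t j := by
    intro i j hij hjM
    induction j with
    | zero => simp_all
    | succ m ihm =>
      rcases Nat.lt_or_ge i (m + 1) with hlt | hge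
      · have h1 : t i ≤ t m := ihm (Nat.lt_succ_iff.1 hlt) (le_trans (Nat.le_succ m) hjM)
        exact h1.trans (ht m (Nat.lt_of_lt_of_le (Nat.lt_succ_self m) hjM)).le
      · have : i = m + 1 := le_antisymm hij hge
        simp [this]
  have hn_pos : ∀ k < M, 0 < t (k + 1) - t k := fun k hk => sub_pos.2 (ht k hk)
  have hh_ge : ∀ k < M, t (k + 1) - t k ≤ h := fun k hk => hmax.2 ⟨k, hk, rfl⟩
  have hh_pos : 0 < h := lt_of_lt_of_le (hn_pos 0 hM) (hh_ge 0 hM)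
  set Cb := Real.exp (C₁ * h) with hCb_def
  have hCb_gt : 1 < Cb := Real.one_lt_exp_iff.2 (by positivity)
  have hCb_pos : (0:ℝ) ≤ Cb := le_of_lt (lt_trans one_pos hCb_gt)
  have hκ_nn : ∀ k < M, 0 ≤ κ k := fun k hk =>
    (abs_nonneg _).trans (hκ k hk (t k) ⟨le_refl _, (ht k hk).le⟩)
  have hebar_ge : ∀ k < M,
      C₁ * (t (k+1) - t k) * κ k * Real.exp (C₁ * (t (k+1) - t k)) ≤ ebar :=
    fun k hk => hebar.2 ⟨k, hk, rfl⟩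
  have hsub : ∀ k < M, Set.Icc (t k) (t (k+1)) ⊆ Set.Icc (t 0) (t M) := by
    intro k hk s hs
    exact ⟨(hmono 0 k (Nat.zero_le _) hk.le).trans hs.1,
      hs.2.trans (hmono (k+1) M hk (le_refl _))⟩
  have hK : ((C₁.toNNReal : ℝ)) = C₁ := Real.coe_toNNReal _ hC₁.le
  -- Step inequality for the input-discretization error (Grönwall)
  have step1 : ∀ k < M,
      ‖x (t (k+1)) - xt (t (k+1))‖ ≤ Cb * ‖x (t k) - xt (t k)‖ + ebar := by
    intro k hk
    set a := t k with ha_def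
    set b := t (k+1) with hb_def
    have hab : a < b := ht k hk
    have hsubk := hsub k hk
    have hv : ∀ s : ℝ, LipschitzWith C₁.toNNReal (fun y => f y (u s)) := by
      intro s
      apply LipschitzWith.of_dist_le_mul
      intro y₁ y₂
      rw [dist_eq_norm, dist_eq_norm, hK]
      exact hf_lip_state y₁ y₂ (u s)
    have hfc : ContinuousOn x (Set.Icc a b) := fun s hs =>
      ((hx s (hsubk hs)).continuousAt).continuousWithinAt
    have hgc : ContinuousOn xt (Set.Icc a b) := fun s hs =>
      ((hxt s (hsubk hs)).continuousAt).continuousWithinAt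
    have hf' : ∀ s ∈ Set.Ico a b, HasDerivWithinAt x (f (x s) (u s)) (Set.Ici s) s :=
      fun s hs => (hx s (hsubk (Set.Ico_subset_Icc_self hs))).hasDerivWithinAt
    have hg' : ∀ s ∈ Set.Ico a b, HasDerivWithinAt xt (f (xt s) (um s)) (Set.Ici s) s :=
      fun s hs => (hxt s (hsubk (Set.Ico_subset_Icc_self hs))).hasDerivWithinAt
    have fb : ∀ s ∈ Set.Ico a b, dist (f (x s) (u s)) ((fun y => f y (u s)) (x s)) ≤ 0 := by
      intro s _; simp
    have gb : ∀ s ∈ Set.Ico a b,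
        dist (f (xt s) (um s)) ((fun y => f y (u s)) (xt s)) ≤ C₁ * κ k := by
      intro s hs
      rw [dist_eq_norm]
      calc ‖f (xt s) (um s) - f (xt s) (u s)‖ ≤ C₁ * |um s - u s| := hf_lip_input _ _ _
        _ = C₁ * |u s - um s| := by rw [abs_sub_comm]
        _ ≤ C₁ * κ k :=
            mul_le_mul_of_nonneg_left (hκ k hk s (Set.Ico_subset_Icc_self hs)) hC₁.le
    have hgron := dist_le_of_approx_trajectories_ODE hv hfc hf' fb hgc hg' gb
      (le_of_eq (dist_eq_norm _ _)) b (Set.right_mem_Icc.2 hab.le)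
    rw [dist_eq_norm, gronwallBound_of_K_ne_0 (by rw [hK]; exact hC₁.ne')] at hgron
    rw [hK] at hgron
    have hez : Real.exp (C₁ * (b - a)) ≤ Cb :=
      Real.exp_le_exp.2 (mul_le_mul_of_nonneg_left (hh_ge k hk) hC₁.le)
    have hδ : (0:ℝ) ≤ ‖x a - xt a‖ := norm_nonneg _
    have hzpos : (0:ℝ) < b - a := sub_pos.2 hab
    have hexp := deeponet_exp_ineq (C₁ * (b - a)) (by positivity)
    have hge := hebar_ge k hk
    have hκk := hκ_nn k hk
    have h1 : (0 + C₁ * κ k)/C₁ = κ k := by field_simp; ring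
    rw [h1] at hgron
    have h2 : κ k * (Real.exp (C₁ * (b - a)) - 1)
        ≤ C₁ * (b - a) * κ k * Real.exp (C₁ * (b - a)) := by
      nlinarith [mul_le_mul_of_nonneg_left hexp hκk]
    have h3 : ‖x a - xt a‖ * Real.exp (C₁ * (b - a)) ≤ ‖x a - xt a‖ * Cb :=
      mul_le_mul_of_nonneg_left hez hδ
    beta_reduce at hgron
    nlinarith [hgron, hge]
  -- Input-discretization error bound (Lemma 2)
  have e1 : ‖x (t n) - xt (t n)‖ ≤ (∑ i ∈ Finset.range n, Cb ^ i) * ebar := by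
    apply deeponet_rec_bound hCb_pos (by simp [hinit]) n
    exact fun k hk => step1 k (lt_of_lt_of_le hk hn)
  -- Step inequality for the network-approximation error
  have step2 : ∀ k < M, ‖xt (t (k+1)) - xc (k+1)‖ ≤ C₂ * ‖xt (t k) - xc k‖ + ebar := by
    intro k hk
    rw [hΦ_flow k hk, hxc k]
    calc ‖Φ (xt (t k)) (c k) (t (k+1) - t k) - F (xc k) (c k) (t (k+1) - t k)‖
        ≤ ‖Φ (xt (t k)) (c k) (t (k+1) - t k) - Φ (xc k) (c k) (t (k+1) - t k)‖
          + ‖Φ (xc k) (c k) (t (k+1) - t k) - F (xc k) (c k) (t (k+1) - t k)‖ :=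
          norm_sub_le_norm_sub_add_norm_sub _ _ _
      _ ≤ C₂ * ‖xt (t k) - xc k‖ + ebar :=
          add_le_add (hΦ_lip _ _ _ _) (by rw [norm_sub_rev]; exact hF _ _ _)
  -- Network-approximation error bound (Lemma 3)
  have e2 : ‖xt (t n) - xc n‖ ≤ (∑ i ∈ Finset.range n, C₂ ^ i) * ebar := by
    apply deeponet_rec_bound hC₂.le (by simp [hxc0, ← hinit]) n
    exact fun k hk => step2 k (lt_of_lt_of_le hk hn)
  -- Combine by the triangle inequality
  have tri : ‖x (t n) - xc n‖ ≤ ‖x (t n) - xt (t n)‖ + ‖xt (t n) - xc n‖ :=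
    norm_sub_le_norm_sub_add_norm_sub _ _ _
  rw [deeponet_geom_sum_eq (ne_of_gt hCb_gt) n, deeponet_geom_sum_eq hC₂1 n]
  linarith
end
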